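/- For every natural number z ≥ 2 there exists a bound U : ℕ such that the following holds: there is no 3×3 magic square A of pairwise distinct positive integer entries together with a natural number t ≥ 2 such that the largest entry of A equals t^z, the entry (t−1)^(z−1) occurs in A and every entry of A other than the largest is at most (t−1)^(z−1) (i.e., (t−1)^(z−1) is the second-largest entry), and t^z > U. Equivalently, any such magic square must have all entries at most U. -/
import Mathlib


/-- The 3×3 magic-square system with magic constant `M`: all three row sums,
all three column sums, the main diagonal and the antidiagonal equal `M`. -/
def IsMagic3 (A : Matrix (Fin 3) (Fin 3) ℤ) (M : ℤ) : Prop :=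
  A 0 0 + A 0 1 + A 0 2 = M ∧
  A 1 0 + A 1 1 + A 1 2 = M ∧
  A 2 0 + A 2 1 + A 2 2 = M ∧
  A 0 0 + A 1 0 + A 2 0 = M ∧
  A 0 1 + A 1 1 + A 2 1 = M ∧
  A 0 2 + A 1 2 + A 2 2 = M ∧
  A 0 0 + A 1 1 + A 2 2 = M ∧
  A 0 2 + A 1 1 + A 2 0 = M

theorem finite_bound_for_mixed_power_magic_squares (z : ℕ) (hz : 2 ≤ z) :
    ∃ U : ℕ,
      ¬ ∃ (A : Matrix (Fin 3) (Fin 3) ℤ) (M : ℤ) (t : ℕ),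
          IsMagic3 A M ∧
          Function.Injective (fun p : Fin 3 × Fin 3 => A p.1 p.2) ∧
          (∀ i j : Fin 3, 0 < A i j) ∧
          2 ≤ t ∧
          (∃ i j : Fin 3, A i j = (t : ℤ) ^ z) ∧
          (∀ i j : Fin 3, A i j ≤ (t : ℤ) ^ z) ∧
          (∃ i j : Fin 3, A i j = ((t : ℤ) - 1) ^ (z - 1)) ∧
          (∀ i j : Fin 3, A i j ≠ (t : ℤ) ^ z →
            A i j ≤ ((t : ℤ) - 1) ^ (z - 1)) ∧
          (U : ℤ) < (t : ℤ) ^ z := by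
  use 0
  rintro ⟨A, M, t, ⟨h00, h1, h2, h3, h4, h5, h6, h7⟩, hinj, hpos, ht2,
    ⟨i0, j0, hmax⟩, hle, ⟨i1, j1, hs⟩, hsec, hU⟩
  set s : ℤ := ((t : ℤ) - 1) ^ (z - 1) with hs_def
  have huniq : ∀ i j : Fin 3, A i j = (t : ℤ) ^ z → (i, j) = (i0, j0) := by
    intro i j h
    exact hinj (a₁ := (i, j)) (a₂ := (i0, j0)) (by simpa using h.trans hmax.symm)
  have hne : ∀ i j : Fin 3, (i, j) ≠ (i0, j0) → A i j ≤ s := by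
    intro i j h
    exact hsec i j fun he => h (huniq i j he)
  have hrow : ∀ r : Fin 3, A r 0 + A r 1 + A r 2 = M := by
    intro r
    fin_cases r
    · exact h00
    · exact h1
    · exact h2
  have hadd1 : ∀ i : Fin 3, i + 1 ≠ i := by decide
  have hadd12 : ∀ j : Fin 3, j + 1 ≠ j + 2 := by decide
  -- M ≤ 3 s, from the row i0 + 1
  have hMle : M ≤ 3 * s := by
    have e := hrow (i0 + 1)
    have l0 := hne (i0 + 1) 0 (by simp [Prod.ext_iff, hadd1 i0])
    have l1 := hne (i0 + 1) 1 (by simp [Prod.ext_iff, hadd1 i0])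
    have l2 := hne (i0 + 1) 2 (by simp [Prod.ext_iff, hadd1 i0])
    linarith
  -- M ≥ t^z + 3, from the row i0
  have hsum : A i0 j0 + A i0 (j0 + 1) + A i0 (j0 + 2) = M := by
    have e := hrow i0
    fin_cases j0 <;> simpa using by linarith
  have hab : A i0 (j0 + 1) ≠ A i0 (j0 + 2) := by
    intro he
    have := hinj (a₁ := (i0, j0 + 1)) (a₂ := (i0, j0 + 2)) (by simpa using he)
    exact hadd12 j0 (by simpa [Prod.ext_iff] using this)
  have ha := hpos i0 (j0 + 1)
  have hb := hpos i0 (j0 + 2)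
  have habsum : 3 ≤ A i0 (j0 + 1) + A i0 (j0 + 2) := by omega
  have hMge : (t : ℤ) ^ z + 3 ≤ M := by rw [← hsum, hmax]; linarith
  -- key arithmetic inequality
  have ht : (2 : ℤ) ≤ (t : ℤ) := by exact_mod_cast ht2
  have hkey : 3 * s < (t : ℤ) ^ z + 3 := by
    rcases eq_or_lt_of_le ht with h | h
    · have : s = 1 := by rw [hs_def, ← h]; norm_num
      have : (0 : ℤ) < (t : ℤ) ^ z := pow_pos (by linarith) z
      linarith
    · have h3 : (3 : ℤ) ≤ (t : ℤ) := by linarith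
      have hnn : (0 : ℤ) ≤ (t : ℤ) - 1 := by linarith
      have e1 : 3 * s ≤ (t : ℤ) * s :=
        mul_le_mul_of_nonneg_right h3 (pow_nonneg hnn _)
      have e2 : (t : ℤ) * s ≤ (t : ℤ) * (t : ℤ) ^ (z - 1) :=
        mul_le_mul_of_nonneg_left (pow_le_pow_left₀ hnn (by linarith) _) (by linarith)
      have e3 : (t : ℤ) * (t : ℤ) ^ (z - 1) = (t : ℤ) ^ z := by
        rw [← pow_succ']
        congr 1
        omega
      linarith
  linarith
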